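/- arXiv:1906.05223 — 2 statements merged into one kernel-verified Lean document; each statement's English description precedes it below -/
import Mathlib

section
/- The map M_{0,5} → (P^1)^5 sending a Möbius-equivalence class of an ordered quintuple of distinct points of P^1 to the 5-tuple of cross-ratios of the quadruples obtained by omitting each point in turn is injective. -/
/-!
Möbius transformations are the action of `GL(2, ℂ)` on `P¹` (Mathlib's `OnePoint` action), and on
homogeneous coordinates they act linearly up to a nonzero scalar, so every `2 × 2` determinant
`det2` is multiplied by the determinant of the matrix and a product of scalars which cancels in
the cross-ratio. Since `GL(2, ℂ)` is transitive on triples of distinct points, some `g` sends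
`z₁, z₂, z₃` to `w₁, w₂, w₃`. A cross-ratio is injective in its first argument (a Plücker
relation), and by its reversal symmetry also in its last one, so the cross-ratios of
`(z₀, z₁, z₂, z₃)` and of `(z₁, z₂, z₃, z₄)` force `g z₀ = w₀` and `g z₄ = w₄`.
-/

noncomputable section

open OnePoint

/-- Homogeneous coordinates for a point of `P¹ = ℂ ∪ {∞}`. -/
def toPair : OnePoint ℂ → ℂ × ℂ := fun z => Option.elim z (1, 0) (fun w => (w, 1))

/-- The `2×2` determinant of two pairs of homogeneous coordinates;
for finite points it is `p - q`. -/
def det2 (p q : ℂ × ℂ) : ℂ := p.1 * q.2 - q.1 * p.2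

/-- The cross-ratio `(z₄-z₁)(z₂-z₃)/((z₄-z₃)(z₂-z₁))` of four points of
`P¹ = ℂ ∪ {∞}`, computed homogeneously (so that the usual conventions for `∞`
hold); for four distinct points it is a finite complex number `≠ 0, 1`. -/
def crossRatio (z₁ z₂ z₃ z₄ : OnePoint ℂ) : ℂ :=
  det2 (toPair z₄) (toPair z₁) * det2 (toPair z₂) (toPair z₃) /
    (det2 (toPair z₄) (toPair z₃) * det2 (toPair z₂) (toPair z₁))

open scoped Classical in
/-- The Möbius transformation `z ↦ (az+b)/(cz+d)` on `P¹ = ℂ ∪ {∞}`. -/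
noncomputable def moebius (a b c d : ℂ) (z : OnePoint ℂ) : OnePoint ℂ :=
  if c * (toPair z).1 + d * (toPair z).2 = 0 then OnePoint.infty
  else (((a * (toPair z).1 + b * (toPair z).2) /
      (c * (toPair z).1 + d * (toPair z).2) : ℂ) : OnePoint ℂ)

open Matrix

@[simp] lemma toPair_infty : toPair (∞ : OnePoint ℂ) = (1, 0) := rfl

@[simp] lemma toPair_coe (t : ℂ) : toPair (t : OnePoint ℂ) = (t, 1) := rfl

lemma toPair_ne_zero (z : OnePoint ℂ) : toPair z ≠ 0 := by
  cases z <;> simp [Prod.ext_iff]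

lemma det2_toPair_eq_zero_iff {z w : OnePoint ℂ} : det2 (toPair z) (toPair w) = 0 ↔ z = w := by
  cases z <;> cases w <;> simp [det2, sub_eq_zero, eq_comm]

lemma det2_toPair_ne_zero {z w : OnePoint ℂ} (h : z ≠ w) : det2 (toPair z) (toPair w) ≠ 0 :=
  det2_toPair_eq_zero_iff.not.mpr h

lemma det2_self (v : ℂ × ℂ) : det2 v v = 0 := by
  simp only [det2]; ring

lemma det2_pluecker (p q r s : ℂ × ℂ) :
    det2 p r * det2 q s - det2 p s * det2 q r = det2 p q * det2 r s := by
  simp only [det2]; ring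

open scoped Classical in
def ofPair (v : ℂ × ℂ) : OnePoint ℂ := if v.2 = 0 then ∞ else ((v.1 / v.2 : ℂ) : OnePoint ℂ)

lemma toPair_ofPair {v : ℂ × ℂ} (hv : v ≠ 0) : ∃ μ : ℂ, μ ≠ 0 ∧ toPair (ofPair v) = μ • v := by
  obtain ⟨x, y⟩ := v
  by_cases hy : y = 0
  · subst hy
    have hx : x ≠ 0 := by simpa using hv
    exact ⟨x⁻¹, inv_ne_zero hx, by simp [ofPair, hx]⟩
  · exact ⟨y⁻¹, inv_ne_zero hy, by simp [ofPair, hy, div_eq_inv_mul]⟩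

def mulPair (g : GL (Fin 2) ℂ) (v : ℂ × ℂ) : ℂ × ℂ :=
  (g 0 0 * v.1 + g 0 1 * v.2, g 1 0 * v.1 + g 1 1 * v.2)

section

variable (g : GL (Fin 2) ℂ)

lemma moebius_eq_smul (z : OnePoint ℂ) :
    moebius (g 0 0) (g 0 1) (g 1 0) (g 1 1) z = g • z := by
  cases z <;> simp [moebius, smul_infty_eq_ite, smul_some_eq_ite]

lemma smul_eq_ofPair (z : OnePoint ℂ) : g • z = ofPair (mulPair g (toPair z)) := by
  rw [← moebius_eq_smul]; rfl

lemma mulPair_ne_zero {v : ℂ × ℂ} (hv : v ≠ 0) : mulPair g v ≠ 0 := by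
  have hvec : ![v.1, v.2] ≠ 0 := by simpa [Prod.ext_iff, funext_iff, Fin.forall_fin_two] using hv
  simpa [mulPair, Prod.ext_iff, funext_iff, Fin.forall_fin_two] using
    (smul_ne_zero_iff_ne g).mpr hvec

lemma toPair_smul (z : OnePoint ℂ) :
    ∃ μ : ℂ, μ ≠ 0 ∧ toPair (g • z) = μ • mulPair g (toPair z) := by
  rw [smul_eq_ofPair]
  exact toPair_ofPair (mulPair_ne_zero g (toPair_ne_zero z))

lemma det2_smul_mulPair (μ ν : ℂ) (v w : ℂ × ℂ) :
    det2 (μ • mulPair g v) (ν • mulPair g w) =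
      μ * ν * (g : Matrix (Fin 2) (Fin 2) ℂ).det * det2 v w := by
  simp only [det2, mulPair, det_fin_two, Prod.smul_mk, smul_eq_mul]; ring

lemma crossRatio_smul (z₁ z₂ z₃ z₄ : OnePoint ℂ) :
    crossRatio (g • z₁) (g • z₂) (g • z₃) (g • z₄) = crossRatio z₁ z₂ z₃ z₄ := by
  obtain ⟨μ₁, hμ₁, e₁⟩ := toPair_smul g z₁
  obtain ⟨μ₂, hμ₂, e₂⟩ := toPair_smul g z₂
  obtain ⟨μ₃, hμ₃, e₃⟩ := toPair_smul g z₃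
  obtain ⟨μ₄, hμ₄, e₄⟩ := toPair_smul g z₄
  have hc : μ₁ * μ₂ * μ₃ * μ₄ * (g : Matrix (Fin 2) (Fin 2) ℂ).det ^ 2 ≠ 0 := by
    have := g.det_ne_zero
    positivity
  simp only [crossRatio, e₁, e₂, e₃, e₄, det2_smul_mulPair]
  refine .trans ?_ (mul_div_mul_left _ _ hc)
  congr 1 <;> ring

end

/-- The homogeneous form of `z ↦ (z - p)(q - r) / ((z - r)(q - p))`. -/
lemma exists_mulPair_eq_det2 {P Q R : ℂ × ℂ} (hQR : det2 Q R ≠ 0) (hQP : det2 Q P ≠ 0)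
    (hPR : det2 P R ≠ 0) :
    ∃ g : GL (Fin 2) ℂ, ∀ v, mulPair g v = (det2 v P * det2 Q R, det2 Q P * det2 v R) := by
  let A : Matrix (Fin 2) (Fin 2) ℂ :=
    !![P.2 * det2 Q R, -P.1 * det2 Q R; R.2 * det2 Q P, -R.1 * det2 Q P]
  have hA : A.det ≠ 0 := by
    rw [show A.det = det2 Q R * det2 Q P * det2 P R by simp only [A, det_fin_two_of, det2]; ring]
    positivity
  refine ⟨GeneralLinearGroup.mkOfDetNeZero A hA, fun v => ?_⟩
  simp only [mulPair, GeneralLinearGroup.val_mkOfDetNeZero, A, of_apply, cons_val', cons_val_zero,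
    cons_val_one, empty_val', cons_val_fin_one, det2, Prod.mk.injEq]
  constructor <;> ring

lemma exists_smul_eq_zero_one_infty {p q r : OnePoint ℂ} (hpq : p ≠ q) (hpr : p ≠ r)
    (hqr : q ≠ r) : ∃ g : GL (Fin 2) ℂ,
      g • p = ((0 : ℂ) : OnePoint ℂ) ∧ g • q = ((1 : ℂ) : OnePoint ℂ) ∧ g • r = ∞ := by
  have hQR := det2_toPair_ne_zero hqr
  have hQP := det2_toPair_ne_zero hpq.symm
  have hPR := det2_toPair_ne_zero hpr
  obtain ⟨g, hg⟩ := exists_mulPair_eq_det2 hQR hQP hPR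
  refine ⟨g, ?_, ?_, ?_⟩ <;> simp [smul_eq_ofPair, hg, ofPair, det2_self, hQR, hQP, hPR]

lemma exists_smul_eq_of_three {p q r p' q' r' : OnePoint ℂ} (hpq : p ≠ q) (hpr : p ≠ r)
    (hqr : q ≠ r) (hpq' : p' ≠ q') (hpr' : p' ≠ r') (hqr' : q' ≠ r') :
    ∃ g : GL (Fin 2) ℂ, g • p = p' ∧ g • q = q' ∧ g • r = r' := by
  obtain ⟨S, hSp, hSq, hSr⟩ := exists_smul_eq_zero_one_infty hpq hpr hqr
  obtain ⟨T, hTp, hTq, hTr⟩ := exists_smul_eq_zero_one_infty hpq' hpr' hqr'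
  refine ⟨T⁻¹ * S, ?_, ?_, ?_⟩ <;> rw [mul_smul, inv_smul_eq_iff] <;> simp only [*]

lemma crossRatio_reverse (z₁ z₂ z₃ z₄ : OnePoint ℂ) :
    crossRatio z₄ z₃ z₂ z₁ = crossRatio z₁ z₂ z₃ z₄ := by
  simp only [crossRatio, det2]
  congr 1 <;> ring

lemma crossRatio_injOn_left {a b c : OnePoint ℂ} (hab : a ≠ b) (hcb : c ≠ b) (hca : c ≠ a) :
    Set.InjOn (fun u => crossRatio u a b c) {a}ᶜ := by
  intro u hu v hv h
  simp only [crossRatio] at h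
  rw [div_eq_div_iff (mul_ne_zero (det2_toPair_ne_zero hcb) (det2_toPair_ne_zero (Ne.symm hu)))
    (mul_ne_zero (det2_toPair_ne_zero hcb) (det2_toPair_ne_zero (Ne.symm hv)))] at h
  have key : det2 (toPair c) (toPair a) * det2 (toPair u) (toPair v) *
      (det2 (toPair a) (toPair b) * det2 (toPair c) (toPair b)) = 0 := by
    linear_combination (-(det2 (toPair a) (toPair b) * det2 (toPair c) (toPair b))) *
      det2_pluecker (toPair c) (toPair a) (toPair u) (toPair v) + h
  simpa [det2_toPair_ne_zero hca, det2_toPair_ne_zero hab, det2_toPair_ne_zero hcb,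
    det2_toPair_eq_zero_iff] using key

theorem M05_crossRatio_map_injective_general (z w : Fin 5 → OnePoint ℂ)
    (hz : Function.Injective z) (hw : Function.Injective w)
    (h1 : crossRatio (z 1) (z 2) (z 3) (z 4) = crossRatio (w 1) (w 2) (w 3) (w 4))
    (h5 : crossRatio (z 0) (z 1) (z 2) (z 3) = crossRatio (w 0) (w 1) (w 2) (w 3)) :
    ∃ a b c d : ℂ, a * d - b * c ≠ 0 ∧ ∀ k, moebius a b c d (z k) = w k := by
  obtain ⟨g, hg1, hg2, hg3⟩ := exists_smul_eq_of_three (p := z 1) (q := z 2) (r := z 3)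
    (p' := w 1) (q' := w 2) (r' := w 3) (hz.ne (by decide)) (hz.ne (by decide))
    (hz.ne (by decide)) (hw.ne (by decide)) (hw.ne (by decide)) (hw.ne (by decide))
  have hg0 : g • z 0 = w 0 := by
    refine crossRatio_injOn_left (a := w 1) (b := w 2) (c := w 3) (hw.ne (by decide))
      (hw.ne (by decide)) (hw.ne (by decide)) ?_ (hw.ne (by decide)) ?_
    · rw [Set.mem_compl_singleton_iff, ← hg1]
      exact (MulAction.injective g).ne (hz.ne (by decide))
    · simp only [← hg1, ← hg2, ← hg3, crossRatio_smul, h5]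
  have hg4 : g • z 4 = w 4 := by
    refine crossRatio_injOn_left (a := w 3) (b := w 2) (c := w 1) (hw.ne (by decide))
      (hw.ne (by decide)) (hw.ne (by decide)) ?_ (hw.ne (by decide)) ?_
    · rw [Set.mem_compl_singleton_iff, ← hg3]
      exact (MulAction.injective g).ne (hz.ne (by decide))
    · simp only [← hg1, ← hg2, ← hg3, crossRatio_reverse, crossRatio_smul, h1]
  refine ⟨g 0 0, g 0 1, g 1 0, g 1 1, det_fin_two (g : Matrix (Fin 2) (Fin 2) ℂ) ▸ g.det_ne_zero,
    fun k => (moebius_eq_smul g (z k)).trans ?_⟩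
  fin_cases k <;> assumption

/-- The map `M_{0,5} → (P¹)⁵` sending the class of an
ordered quintuple of distinct points of `P¹` to its five omitted-point
cross-ratios is injective: two quintuples with the same five cross-ratios are
related by a Möbius transformation. -/
theorem M05_crossRatio_map_injective (z w : Fin 5 → OnePoint ℂ)
    (hz : Function.Injective z) (hw : Function.Injective w)
    (h1 : crossRatio (z 1) (z 2) (z 3) (z 4) = crossRatio (w 1) (w 2) (w 3) (w 4))
    (h2 : crossRatio (z 0) (z 2) (z 3) (z 4) = crossRatio (w 0) (w 2) (w 3) (w 4))
    (h3 : crossRatio (z 0) (z 1) (z 3) (z 4) = crossRatio (w 0) (w 1) (w 3) (w 4))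
    (h4 : crossRatio (z 0) (z 1) (z 2) (z 4) = crossRatio (w 0) (w 1) (w 2) (w 4))
    (h5 : crossRatio (z 0) (z 1) (z 2) (z 3) = crossRatio (w 0) (w 1) (w 2) (w 3)) :
    ∃ a b c d : ℂ, a * d - b * c ≠ 0 ∧ ∀ k, moebius a b c d (z k) = w k :=
  M05_crossRatio_map_injective_general z w hz hw h1 h5
end
end

section
/- In a tree t without bivalent vertices whose leaves α and β are not adjacent, the leaf-attachment points of α and β, viewed after deleting both leaves (i.e., as points of ∂_α ∂_β t which are either internal vertices or midpoints of edges), are distinct; consequently, the tree t is recovered by simultaneously attaching leaves α and β to ∂_α ∂_β t at these two distinct points. -/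
set_option linter.unusedSectionVars false

/-- A tree without bivalent vertices whose leaves are labelled bijectively by `A`,
encoded (via the split-equivalence theorem) by its set of splits: each internal
edge of the tree determines the bipartition of the leaf set into the leaves on
its two sides; both sides have at least two elements and any two splits are
compatible (some pair of opposite sides is disjoint). -/
structure LTree (A : Type*) [Fintype A] [DecidableEq A] where
  splits : Finset (Finset A)
  compl_mem : ∀ B ∈ splits, Bᶜ ∈ splits
  two_le : ∀ B ∈ splits, 2 ≤ B.card
  two_le_compl : ∀ B ∈ splits, 2 ≤ Bᶜ.card
  compat : ∀ B ∈ splits, ∀ C ∈ splits,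
    B ∩ C = ∅ ∨ B ∩ Cᶜ = ∅ ∨ Bᶜ ∩ C = ∅ ∨ Bᶜ ∩ Cᶜ = ∅

namespace LTree

variable {A B : Type*} [Fintype A] [DecidableEq A] [Fintype B] [DecidableEq B]

@[ext] theorem ext' {t t' : LTree A} (h : t.splits = t'.splits) : t = t' := by
  cases t; cases t'; simpa using h

private lemma image_compl (e : A ≃ B) (S : Finset A) :
    (S.image e)ᶜ = Sᶜ.image e := by
  ext b
  simp only [Finset.mem_compl, Finset.mem_image]
  constructor
  · intro h
    exact ⟨e.symm b, fun hm => h ⟨e.symm b, hm, e.apply_symm_apply b⟩, e.apply_symm_apply b⟩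
  · rintro ⟨a, ha, rfl⟩ ⟨a', ha', he⟩
    exact ha (e.injective he ▸ ha')

/-- Relabelling the leaves of a tree along a bijection of the label sets. -/
def relabel (e : A ≃ B) (t : LTree A) : LTree B where
  splits := t.splits.image (Finset.image e)
  compl_mem := by
    simp only [Finset.mem_image, forall_exists_index, and_imp]
    rintro _ C hC rfl
    exact ⟨Cᶜ, t.compl_mem C hC, (image_compl e C).symm⟩
  two_le := by
    simp only [Finset.mem_image, forall_exists_index, and_imp]
    rintro _ C hC rfl
    rw [Finset.card_image_of_injective _ e.injective]
    exact t.two_le C hC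
  two_le_compl := by
    simp only [Finset.mem_image, forall_exists_index, and_imp]
    rintro _ C hC rfl
    rw [image_compl e C, Finset.card_image_of_injective _ e.injective]
    exact t.two_le_compl C hC
  compat := by
    simp only [Finset.mem_image, forall_exists_index, and_imp]
    rintro _ C hC rfl _ D hD rfl
    have key : ∀ S T : Finset A, S ∩ T = ∅ → (S.image e) ∩ (T.image e) = ∅ := by
      intro S T h
      rw [← Finset.image_inter _ _ e.injective, h, Finset.image_empty]
    rw [image_compl e C, image_compl e D]
    rcases t.compat C hC D hD with h | h | h | h
    · exact Or.inl (key _ _ h)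
    · exact Or.inr (Or.inl (key _ _ h))
    · exact Or.inr (Or.inr (Or.inl (key _ _ h)))
    · exact Or.inr (Or.inr (Or.inr (key _ _ h)))

private lemma subtype_compl (μ : A) (S : Finset A) :
    (S.subtype (· ≠ μ))ᶜ = Sᶜ.subtype (· ≠ μ) := by
  ext a
  simp [Finset.mem_subtype]

private lemma subtype_inter (μ : A) (S T : Finset A) :
    (S.subtype (· ≠ μ)) ∩ (T.subtype (· ≠ μ)) = (S ∩ T).subtype (· ≠ μ) := by
  ext a
  simp [Finset.mem_subtype]

/-- The map `∂_μ`: erase the leaf labelled `μ` (and smooth out any resulting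
bivalent vertex).  In the split encoding this restricts every split to
`A \ {μ}` and discards the splits that become degenerate. -/
def del (t : LTree A) (μ : A) : LTree {a : A // a ≠ μ} where
  splits := (t.splits.image (fun C => C.subtype (· ≠ μ))).filter
      (fun C => 2 ≤ C.card ∧ 2 ≤ Cᶜ.card)
  compl_mem := by
    simp only [Finset.mem_filter, Finset.mem_image, forall_exists_index, and_imp]
    rintro _ C hC rfl h1 h2
    refine ⟨⟨Cᶜ, t.compl_mem C hC, (subtype_compl μ C).symm⟩, ?_, ?_⟩
    · exact h2
    · rwa [compl_compl]
  two_le := fun C hC => ((Finset.mem_filter.mp hC).2).1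
  two_le_compl := fun C hC => ((Finset.mem_filter.mp hC).2).2
  compat := by
    simp only [Finset.mem_filter, Finset.mem_image, forall_exists_index, and_imp]
    rintro _ C hC rfl - - _ D hD rfl - -
    have key : ∀ S T : Finset A, S ∩ T = ∅ →
        (S.subtype (· ≠ μ)) ∩ (T.subtype (· ≠ μ)) = ∅ := by
      intro S T h
      rw [subtype_inter, h]
      ext a
      simp [Finset.mem_subtype]
    rw [subtype_compl μ C, subtype_compl μ D]
    rcases t.compat C hC D hD with h | h | h | h
    · exact Or.inl (key _ _ h)
    · exact Or.inr (Or.inl (key _ _ h))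
    · exact Or.inr (Or.inr (Or.inl (key _ _ h)))
    · exact Or.inr (Or.inr (Or.inr (key _ _ h)))

/-- `S` is a "block" of `t`: the set of leaves hanging off a single edge,
i.e. either a single leaf or one side of an internal edge. -/
def Block (t : LTree A) (S : Finset A) : Prop := S.card = 1 ∨ S ∈ t.splits

/-- Two leaves `α`, `β` of `t` are adjacent if either they are attached to the
same vertex (no split separates them), or their attachment vertices are both
trivalent and joined by an edge (there is a split separating them such that on
each side, removing the leaf leaves a single block). -/
def Adjacent (t : LTree A) (α β : A) : Prop :=
  (∀ C ∈ t.splits, (α ∈ C ↔ β ∈ C)) ∨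
  ∃ C ∈ t.splits, α ∈ C ∧ β ∉ C ∧ t.Block (C.erase α) ∧ t.Block (Cᶜ.erase β)

end LTree

/-- The combinatorial description, inside `∂_γ t`, of the point (an internal
vertex or the midpoint of an edge) at which the leaf `γ` of `t` is attached:
the collection of the sets `C \ {γ}` for the split sides `C` of `t`
containing `γ`. -/
def LTree.ptData {A : Type*} [Fintype A] [DecidableEq A] (t : LTree A) (γ : A) :
    Finset (Finset A) :=
  (t.splits.filter (fun C => γ ∈ C)).image (fun C => C.erase γ)

namespace LTree
variable {A : Type*} [Fintype A] [DecidableEq A]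

lemma subtype_val_image (μ : A) (S : Finset A) :
    (S.subtype (· ≠ μ)).image Subtype.val = S.erase μ := by
  ext a
  simp only [Finset.mem_image, Finset.mem_subtype, Finset.mem_erase]
  constructor
  · rintro ⟨⟨b, hb⟩, hbS, rfl⟩; exact ⟨hb, hbS⟩
  · rintro ⟨ha, haS⟩; exact ⟨⟨a, ha⟩, haS, rfl⟩

lemma subtype_val_erase {μ a : A} (ha : a ≠ μ) (S : Finset A) :
    ((S.subtype (· ≠ μ)).erase ⟨a, ha⟩).image Subtype.val = (S.erase μ).erase a := by
  ext b
  simp only [Finset.mem_image, Finset.mem_erase, Finset.mem_subtype]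
  constructor
  · rintro ⟨⟨c, hc⟩, ⟨hne, hcS⟩, rfl⟩
    exact ⟨by simpa using fun h => hne (by simp [h]), hc, hcS⟩
  · rintro ⟨hba, hbμ, hbS⟩
    exact ⟨⟨b, hbμ⟩, ⟨by simpa using hba, hbS⟩, rfl⟩

lemma subtype_eq_iff {μ : A} {S T : Finset A} :
    S.subtype (· ≠ μ) = T.subtype (· ≠ μ) ↔ S.erase μ = T.erase μ := by
  constructor
  · intro h
    have := congrArg (Finset.image (Subtype.val : {a : A // a ≠ μ} → A)) h
    rwa [subtype_val_image, subtype_val_image] at this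
  · intro h
    ext ⟨a, ha⟩
    simp only [Finset.mem_subtype]
    have := Finset.ext_iff.mp h a
    simp only [Finset.mem_erase] at this
    exact ⟨fun h' => (this.mp ⟨ha, h'⟩).2, fun h' => (this.mpr ⟨ha, h'⟩).2⟩

lemma subtype_card (μ : A) (S : Finset A) :
    (S.subtype (· ≠ μ)).card = (S.erase μ).card := by
  rw [← subtype_val_image μ S, Finset.card_image_of_injective _ Subtype.val_injective]

lemma subtype_compl' (μ : A) (S : Finset A) :
    (S.subtype (· ≠ μ))ᶜ = Sᶜ.subtype (· ≠ μ) := by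
  ext a; simp [Finset.mem_subtype]

lemma subtype_compl_card (μ : A) (S : Finset A) :
    (S.subtype (· ≠ μ))ᶜ.card = (Sᶜ.erase μ).card := by
  rw [subtype_compl', subtype_card]


lemma compl_mem_iff (t : LTree A) {C : Finset A} : Cᶜ ∈ t.splits ↔ C ∈ t.splits :=
  ⟨fun h => by simpa using t.compl_mem _ h, fun h => t.compl_mem _ h⟩

lemma compat4 (t : LTree A) {B C : Finset A} (hB : B ∈ t.splits) (hC : C ∈ t.splits)
    {a b c d : A} (ha1 : a ∈ B) (ha2 : a ∈ C) (hb1 : b ∈ B) (hb2 : b ∉ C)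
    (hc1 : c ∉ B) (hc2 : c ∈ C) (hd1 : d ∉ B) (hd2 : d ∉ C) : False := by
  rcases t.compat B hB C hC with h | h | h | h
  · exact Finset.eq_empty_iff_forall_notMem.mp h a (Finset.mem_inter.mpr ⟨ha1, ha2⟩)
  · exact Finset.eq_empty_iff_forall_notMem.mp h b (Finset.mem_inter.mpr ⟨hb1, Finset.mem_compl.mpr hb2⟩)
  · exact Finset.eq_empty_iff_forall_notMem.mp h c (Finset.mem_inter.mpr ⟨Finset.mem_compl.mpr hc1, hc2⟩)
  · exact Finset.eq_empty_iff_forall_notMem.mp h d (Finset.mem_inter.mpr ⟨Finset.mem_compl.mpr hd1, Finset.mem_compl.mpr hd2⟩)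

lemma recon {C W : Finset A} {μ ν : A} (hμν : μ ≠ ν) (hμ : μ ∈ C)
    (hW : W = (C.erase ν).erase μ) :
    (ν ∉ C ∧ C = insert μ W) ∨ (ν ∈ C ∧ C = insert μ (insert ν W)) := by
  by_cases hν : ν ∈ C
  · refine Or.inr ⟨hν, ?_⟩
    rw [hW, Finset.erase_right_comm,
      Finset.insert_erase (Finset.mem_erase.mpr ⟨hμν.symm, hν⟩), Finset.insert_erase hμ]
  · refine Or.inl ⟨hν, ?_⟩
    rw [hW, Finset.erase_eq_of_notMem hν, Finset.insert_erase hμ]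

lemma mem_del_iff (t : LTree A) (μ : A) {S : Finset A} (hμ : μ ∉ S) :
    S.subtype (· ≠ μ) ∈ (t.del μ).splits ↔
      ((S ∈ t.splits ∨ insert μ S ∈ t.splits) ∧ 2 ≤ S.card ∧ 2 ≤ (Sᶜ.erase μ).card) := by
  have hSe : S.erase μ = S := Finset.erase_eq_of_notMem hμ
  show _ ∈ Finset.filter _ _ ↔ _
  rw [Finset.mem_filter]
  simp only [Finset.mem_image]
  constructor
  · rintro ⟨⟨C, hC, hCe⟩, h1, h2⟩
    have her : C.erase μ = S := by rw [← hSe]; exact subtype_eq_iff.mp hCe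
    rw [subtype_card, subtype_compl_card, hSe] at *
    refine ⟨?_, h1, h2⟩
    by_cases hm : μ ∈ C
    · right; rwa [← her, Finset.insert_erase hm]
    · left; rwa [← her, Finset.erase_eq_of_notMem hm]
  · rintro ⟨hC, h1, h2⟩
    refine ⟨?_, ?_, ?_⟩
    · rcases hC with hC | hC
      · exact ⟨S, hC, rfl⟩
      · exact ⟨insert μ S, hC, subtype_eq_iff.mpr (by rw [Finset.erase_insert hμ, hSe])⟩
    · rwa [subtype_card, hSe]
    · rwa [subtype_compl_card]

lemma del_transfer {t y : LTree A} (μ : A) (h : y.del μ = t.del μ) {S : Finset A}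
    (hμ : μ ∉ S) (h1 : 2 ≤ S.card) (h2 : 2 ≤ (Sᶜ.erase μ).card) :
    (S ∈ y.splits ∨ insert μ S ∈ y.splits) ↔ (S ∈ t.splits ∨ insert μ S ∈ t.splits) := by
  have hs : (y.del μ).splits = (t.del μ).splits := congrArg LTree.splits h
  constructor <;> intro hx
  · exact ((mem_del_iff t μ hμ).mp (hs ▸ (mem_del_iff y μ hμ).mpr ⟨hx, h1, h2⟩)).1
  · exact ((mem_del_iff y μ hμ).mp (hs ▸ (mem_del_iff t μ hμ).mpr ⟨hx, h1, h2⟩)).1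

lemma mem_P (t : LTree A) {α β : A} (hαβ : α ≠ β) {W : Finset A} :
    W ∈ ((t.del β).ptData ⟨α, hαβ⟩).image (Finset.image Subtype.val) ↔
      ∃ C ∈ t.splits, α ∈ C ∧ 2 ≤ (C.erase β).card ∧ 2 ≤ (Cᶜ.erase β).card ∧
        W = (C.erase β).erase α := by
  simp only [LTree.ptData, Finset.mem_image, Finset.mem_filter]
  constructor
  · rintro ⟨_, ⟨D, ⟨hD, hαD⟩, rfl⟩, rfl⟩
    have hD' := hD
    rw [show (t.del β).splits = Finset.filter _ _ from rfl, Finset.mem_filter] at hD'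
    obtain ⟨hDim, h1, h2⟩ := hD'
    simp only [Finset.mem_image] at hDim
    obtain ⟨C, hC, rfl⟩ := hDim
    rw [subtype_card, subtype_compl_card] at *
    refine ⟨C, hC, by simpa using hαD, h1, h2, (subtype_val_erase hαβ C)⟩
  · rintro ⟨C, hC, hαC, h1, h2, rfl⟩
    refine ⟨(C.subtype (· ≠ β)).erase ⟨α, hαβ⟩, ⟨C.subtype (· ≠ β), ⟨?_, by simpa using hαC⟩, rfl⟩,
      subtype_val_erase hαβ C⟩
    show _ ∈ Finset.filter _ _
    rw [Finset.mem_filter]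
    exact ⟨Finset.mem_image.mpr ⟨C, hC, rfl⟩, by rwa [subtype_card], by rwa [subtype_compl_card]⟩

lemma sep_of_not_forall {t : LTree A} {α β : A}
    (h : ¬ ∀ C ∈ t.splits, (α ∈ C ↔ β ∈ C)) : ∃ C ∈ t.splits, α ∈ C ∧ β ∉ C := by
  push_neg at h
  obtain ⟨C, hC, hne⟩ := h
  rcases hne with ⟨hα, hβ⟩ | ⟨hα, hβ⟩
  · exact ⟨C, hC, hα, hβ⟩
  · exact ⟨Cᶜ, t.compl_mem C hC, Finset.mem_compl.mpr hα,
      fun h' => (Finset.mem_compl.mp h') hβ⟩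

lemma adj_of_sandwich {t : LTree A} {α β : A} (hαβ : α ≠ β) {T : Finset A}
    (hT : T ∈ t.splits) (hT2 : insert α (insert β T) ∈ t.splits)
    (hα : α ∉ T) (hβ : β ∉ T) : t.Adjacent α β := by
  by_cases hall : ∀ C ∈ t.splits, (α ∈ C ↔ β ∈ C)
  · exact Or.inl hall
  obtain ⟨C, hC, hαC, hβC⟩ := sep_of_not_forall hall
  have em : ∀ {U V : Finset A}, U ∩ V = ∅ → ∀ x, x ∈ U → x ∈ V → False := fun h x h1 h2 =>
    Finset.eq_empty_iff_forall_notMem.mp h x (Finset.mem_inter.mpr ⟨h1, h2⟩)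
  have hαT2 : α ∈ insert α (insert β T) := Finset.mem_insert_self _ _
  have hβT2 : β ∈ insert α (insert β T) := Finset.mem_insert_of_mem (Finset.mem_insert_self _ _)
  have h1 : C ∩ T = ∅ ∨ Cᶜ ∩ T = ∅ := by
    rcases t.compat C hC T hT with h | h | h | h
    · exact Or.inl h
    · exact absurd (em h α hαC (Finset.mem_compl.mpr hα)) (by simp)
    · exact Or.inr h
    · exact absurd (em h β (Finset.mem_compl.mpr hβC) (Finset.mem_compl.mpr hβ)) (by simp)
  have h2 : C ∩ (insert α (insert β T))ᶜ = ∅ ∨ Cᶜ ∩ (insert α (insert β T))ᶜ = ∅ := by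
    rcases t.compat C hC _ hT2 with h | h | h | h
    · exact absurd (em h α hαC hαT2) (by simp)
    · exact Or.inl h
    · exact absurd (em h β (Finset.mem_compl.mpr hβC) hβT2) (by simp)
    · exact Or.inr h
  rcases h1 with h1 | h1 <;> rcases h2 with h2 | h2
  · exfalso
    have hsub : C ⊆ {α} := by
      intro w hw
      have hwT2 : w ∈ insert α (insert β T) := by
        by_contra h'; exact em h2 w hw (Finset.mem_compl.mpr h')
      simp only [Finset.mem_insert] at hwT2
      rcases hwT2 with rfl | rfl | hwT
      · exact Finset.mem_singleton_self _
      · exact absurd hw hβC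
      · exact absurd (em h1 w hw hwT) (by simp)
    have hcard := Finset.card_le_card hsub
    have := t.two_le C hC
    simp only [Finset.card_singleton] at hcard
    omega
  · -- C ∩ T = ∅ and Cᶜ ⊆ T2 : Cᶜ = insert β T
    have hCc : Cᶜ = insert β T := by
      ext w
      simp only [Finset.mem_compl, Finset.mem_insert]
      constructor
      · intro hw
        have hwT2 : w ∈ insert α (insert β T) := by
          by_contra h'
          exact em h2 w (Finset.mem_compl.mpr hw) (Finset.mem_compl.mpr h')
        simp only [Finset.mem_insert] at hwT2
        rcases hwT2 with rfl | rfl | hwT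
        · exact absurd hαC hw
        · exact Or.inl rfl
        · exact Or.inr hwT
      · rintro (rfl | hw)
        · exact hβC
        · exact fun hc => em h1 w hc hw
    refine Or.inr ⟨C, hC, hαC, hβC, ?_, ?_⟩
    · have hCeq : C = (insert β T)ᶜ := by rw [← hCc, compl_compl]
      have : C.erase α = (insert α (insert β T))ᶜ := by
        rw [hCeq]; ext w
        simp only [Finset.mem_erase, Finset.mem_compl, Finset.mem_insert]
        tauto
      rw [this]
      exact Or.inr (t.compl_mem _ hT2)
    · have : Cᶜ.erase β = T := by rw [hCc, Finset.erase_insert hβ]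
      rw [this]; exact Or.inr hT
  · -- Cᶜ ∩ T = ∅ (T ⊆ C) and C ⊆ T2 : C = insert α T
    have hCeq : C = insert α T := by
      ext w
      simp only [Finset.mem_insert]
      constructor
      · intro hw
        have hwT2 : w ∈ insert α (insert β T) := by
          by_contra h'; exact em h2 w hw (Finset.mem_compl.mpr h')
        simp only [Finset.mem_insert] at hwT2
        rcases hwT2 with rfl | rfl | hwT
        · exact Or.inl rfl
        · exact absurd hw hβC
        · exact Or.inr hwT
      · rintro (rfl | hw)
        · exact hαC
        · by_contra hc; exact em h1 w (Finset.mem_compl.mpr hc) hw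
    refine Or.inr ⟨C, hC, hαC, hβC, ?_, ?_⟩
    · rw [hCeq, Finset.erase_insert hα]; exact Or.inr hT
    · have : Cᶜ.erase β = (insert α (insert β T))ᶜ := by
        rw [hCeq]; ext w
        simp only [Finset.mem_erase, Finset.mem_compl, Finset.mem_insert]
        tauto
      rw [this]; exact Or.inr (t.compl_mem _ hT2)
  · exfalso
    have hsub : Cᶜ ⊆ {β} := by
      intro w hw
      have hwT2 : w ∈ insert α (insert β T) := by
        by_contra h'; exact em h2 w hw (Finset.mem_compl.mpr h')
      simp only [Finset.mem_insert] at hwT2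
      rcases hwT2 with rfl | rfl | hwT
      · exact absurd hαC (Finset.mem_compl.mp hw)
      · exact Finset.mem_singleton_self _
      · exact absurd (em h1 w hw hwT) (by simp)
    have hcard := Finset.card_le_card hsub
    have := t.two_le_compl C hC
    simp only [Finset.card_singleton] at hcard
    omega

lemma A0 {t y : LTree A} {α β : A} (hαβ : α ≠ β)
    (hyα : y.del α = t.del α) (hyβ : y.del β = t.del β)
    {S : Finset A} (hS : S ∈ y.splits) (hα : α ∉ S) (hβ : β ∉ S)
    (h3 : 3 ≤ Sᶜ.card) : S ∈ t.splits := by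
  have hαc : α ∈ Sᶜ := Finset.mem_compl.mpr hα
  have hβc : β ∈ Sᶜ := Finset.mem_compl.mpr hβ
  have h2 : 2 ≤ S.card := y.two_le S hS
  have e1 : (Sᶜ.erase α).card = Sᶜ.card - 1 := Finset.card_erase_of_mem hαc
  have e2 : (Sᶜ.erase β).card = Sᶜ.card - 1 := Finset.card_erase_of_mem hβc
  have Tα := del_transfer α hyα hα h2 (by omega)
  have Tβ := del_transfer β hyβ hβ h2 (by omega)
  rcases Tα.mp (Or.inl hS) with h | hα'
  · exact h
  rcases Tβ.mp (Or.inl hS) with h | hβ'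
  · exact h
  exfalso
  have hd : 0 < ((Sᶜ.erase α).erase β).card := by
    rw [Finset.card_erase_of_mem (Finset.mem_erase.mpr ⟨hαβ.symm, hβc⟩)]
    omega
  obtain ⟨d, hd⟩ := Finset.card_pos.mp hd
  simp only [Finset.mem_erase, Finset.mem_compl] at hd
  obtain ⟨hdβ, hdα, hdS⟩ := hd
  obtain ⟨s0, hs0⟩ := Finset.card_pos.mp (by omega : 0 < S.card)
  exact compat4 t (a := s0) (b := α) (c := β) (d := d) hα' hβ'
    (Finset.mem_insert_of_mem hs0) (Finset.mem_insert_of_mem hs0)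
    (Finset.mem_insert_self α S) (by simp [Finset.mem_insert, hαβ, hα])
    (by simp [Finset.mem_insert, hαβ.symm, hβ]) (Finset.mem_insert_self β S)
    (by simp [Finset.mem_insert, hdα, hdS]) (by simp [Finset.mem_insert, hdβ, hdS])

lemma Bty {t y : LTree A} {α β : A} (hαβ : α ≠ β) (hadj : ¬ t.Adjacent α β)
    (hyα : y.del α = t.del α) (hyβ : y.del β = t.del β)
    {S : Finset A} (hS : S ∈ t.splits) (hα : α ∈ S) (hβ : β ∉ S) : S ∈ y.splits := by
  have noBB : ∀ _ : t.Block (S.erase α), ∀ _ : t.Block (Sᶜ.erase β), False := fun b1 b2 =>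
    hadj (Or.inr ⟨S, hS, hα, hβ, b1, b2⟩)
  have hc2 : 2 ≤ S.card := t.two_le S hS
  have hc2c : 2 ≤ Sᶜ.card := t.two_le_compl S hS
  have hβc : β ∈ Sᶜ := Finset.mem_compl.mpr hβ
  have hαc : α ∉ Sᶜ := by simp [hα]
  have eα : (S.erase α).card = S.card - 1 := Finset.card_erase_of_mem hα
  have eβ : (Sᶜ.erase β).card = Sᶜ.card - 1 := Finset.card_erase_of_mem hβc
  have hins : (S.erase α)ᶜ = insert α Sᶜ := by
    ext w; simp only [Finset.mem_compl, Finset.mem_erase, Finset.mem_insert]; tauto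
  have hinsc : (insert β S)ᶜ = Sᶜ.erase β := Finset.compl_insert
  by_cases h1 : (S.erase α).card = 1 <;> by_cases h2 : (Sᶜ.erase β).card = 1
  · exact absurd (noBB (Or.inl h1) (Or.inl h2)) (by simp)
  · -- |S| = 2 case
    have h2' : 2 ≤ (Sᶜ.erase β).card := by omega
    rcases (del_transfer β hyβ hβ hc2 h2').mpr (Or.inl hS) with h | h
    · exact h
    exfalso
    have hmy : Sᶜ.erase β ∈ y.splits := by rw [← hinsc]; exact y.compl_mem _ h
    have hmt : Sᶜ.erase β ∈ t.splits := by
      refine A0 hαβ hyα hyβ hmy (fun hc => hαc (Finset.mem_of_mem_erase hc))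
        (Finset.notMem_erase β Sᶜ) ?_
      have : (Sᶜ.erase β)ᶜ = insert β S := by rw [← hinsc, compl_compl]
      rw [this, Finset.card_insert_of_notMem hβ]; omega
    exact noBB (Or.inl h1) (Or.inr hmt)
  · -- |Sᶜ| = 2 case
    have h1' : 2 ≤ (S.erase α).card := by omega
    rcases (del_transfer α hyα hαc hc2c (by rw [compl_compl]; omega)).mpr
        (Or.inl (t.compl_mem S hS)) with h | h
    · exact (compl_mem_iff y).mp h
    exfalso
    have hmy : S.erase α ∈ y.splits := by
      have := y.compl_mem _ h
      rwa [Finset.compl_insert, compl_compl] at this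
    have hmt : S.erase α ∈ t.splits := by
      refine A0 hαβ hyα hyβ hmy (Finset.notMem_erase α S)
        (fun hc => hβ (Finset.mem_of_mem_erase hc)) ?_
      rw [hins, Finset.card_insert_of_notMem hαc]; omega
    exact noBB (Or.inr hmt) (Or.inl h2)
  · -- generic case
    have h1' : 2 ≤ (S.erase α).card := by omega
    have h2' : 2 ≤ (Sᶜ.erase β).card := by omega
    have cond1 : 2 ≤ ((S.erase α)ᶜ.erase α).card := by
      rw [hins, Finset.erase_insert hαc]; omega
    rcases (del_transfer α hyα (Finset.notMem_erase α S) h1' cond1).mpr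
        (Or.inr (by rwa [Finset.insert_erase hα])) with h | h
    swap
    · rwa [Finset.insert_erase hα] at h
    rcases (del_transfer β hyβ hβ hc2 h2').mpr (Or.inl hS) with h' | h'
    · exact h'
    exfalso
    have hT1t : S.erase α ∈ t.splits := by
      refine A0 hαβ hyα hyβ h (Finset.notMem_erase α S)
        (fun hc => hβ (Finset.mem_of_mem_erase hc)) ?_
      rw [hins, Finset.card_insert_of_notMem hαc]; omega
    have hT2t : insert β S ∈ t.splits := by
      refine (compl_mem_iff t).mp ?_
      rw [hinsc]
      refine A0 hαβ hyα hyβ (by rw [← hinsc]; exact y.compl_mem _ h')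
        (fun hc => hαc (Finset.mem_of_mem_erase hc)) (Finset.notMem_erase β Sᶜ) ?_
      rw [← hinsc, compl_compl, Finset.card_insert_of_notMem hβ]; omega
    have hcomm : insert α (insert β (S.erase α)) = insert β S := by
      rw [Finset.insert_comm, Finset.insert_erase hα]
    exact hadj (adj_of_sandwich hαβ hT1t (by rwa [hcomm]) (Finset.notMem_erase α S)
      (fun hc => hβ (Finset.mem_of_mem_erase hc)))

lemma Byt {t y : LTree A} {α β : A} (hαβ : α ≠ β) (hadj : ¬ t.Adjacent α β)
    (hyα : y.del α = t.del α) (hyβ : y.del β = t.del β)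
    {C₀ : Finset A} (hC₀ : C₀ ∈ t.splits) (hαC₀ : α ∈ C₀) (hβC₀ : β ∉ C₀)
    {S : Finset A} (hS : S ∈ y.splits) (hα : α ∈ S) (hβ : β ∉ S) : S ∈ t.splits := by
  have hc2 : 2 ≤ S.card := y.two_le S hS
  have hc2c : 2 ≤ Sᶜ.card := y.two_le_compl S hS
  have hβc : β ∈ Sᶜ := Finset.mem_compl.mpr hβ
  have hαc : α ∉ Sᶜ := by simp [hα]
  have eα : (S.erase α).card = S.card - 1 := Finset.card_erase_of_mem hα
  have eβ : (Sᶜ.erase β).card = Sᶜ.card - 1 := Finset.card_erase_of_mem hβc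
  have hsum := Finset.card_add_card_compl S
  have hins : (S.erase α)ᶜ = insert α Sᶜ := by
    ext w; simp only [Finset.mem_compl, Finset.mem_erase, Finset.mem_insert]; tauto
  have hinsc : (insert β S)ᶜ = Sᶜ.erase β := Finset.compl_insert
  have n5 : 5 ≤ Fintype.card A := by
    have k1 := t.two_le C₀ hC₀
    have k2 := t.two_le_compl C₀ hC₀
    have ksum := Finset.card_add_card_compl C₀
    by_contra hn
    have e1 : (C₀.erase α).card = 1 := by rw [Finset.card_erase_of_mem hαC₀]; omega
    have e2 : (C₀ᶜ.erase β).card = 1 := by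
      rw [Finset.card_erase_of_mem (Finset.mem_compl.mpr hβC₀)]; omega
    exact hadj (Or.inr ⟨C₀, hC₀, hαC₀, hβC₀, Or.inl e1, Or.inl e2⟩)
  have em : ∀ {U V : Finset A}, U ∩ V = ∅ → ∀ x, x ∈ U → x ∈ V → False := fun h x h1 h2 =>
    Finset.eq_empty_iff_forall_notMem.mp h x (Finset.mem_inter.mpr ⟨h1, h2⟩)
  by_cases h1 : (S.erase α).card = 1
  · -- |S| = 2
    have h2' : 2 ≤ (Sᶜ.erase β).card := by omega
    rcases (del_transfer β hyβ hβ hc2 h2').mp (Or.inl hS) with h | hT2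
    · exact h
    -- dichotomy with C₀ and insert β S ∈ t.splits
    obtain ⟨x, hxeq⟩ := Finset.card_eq_one.mp h1
    have hxS : x ∈ S ∧ x ≠ α := by
      have : x ∈ S.erase α := by rw [hxeq]; exact Finset.mem_singleton_self x
      exact ⟨Finset.mem_of_mem_erase this, (Finset.mem_erase.mp this).1⟩
    have hSeq : S = insert α {x} := by rw [← hxeq, Finset.insert_erase hα]
    have hxβ : x ≠ β := fun h' => hβ (h' ▸ hxS.1)
    rcases t.compat C₀ hC₀ _ hT2 with h | h | h | h
    · exact absurd (em h α hαC₀ (Finset.mem_insert_of_mem hα)) (by simp)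
    · -- C₀ ⊆ insert β S, so C₀ ⊆ S, so C₀ = S
      have hsub : C₀ ⊆ S := by
        intro w hw
        have : w ∈ insert β S := by
          by_contra h'; exact em h w hw (Finset.mem_compl.mpr h')
        rcases Finset.mem_insert.mp this with rfl | h''
        · exact absurd hw hβC₀
        · exact h''
      have h2C := t.two_le C₀ hC₀
      have := Finset.eq_of_subset_of_card_le hsub (by omega)
      rwa [← this]
    · exact absurd (em h β (Finset.mem_compl.mpr hβC₀) (Finset.mem_insert_self β S)) (by simp)
    · -- (insert β S)ᶜ ⊆ C₀
      exfalso
      have hsub : (insert β S)ᶜ ⊆ C₀ := by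
        intro w hw
        by_contra h'; exact em h w (Finset.mem_compl.mpr h') hw
      by_cases hx : x ∈ C₀
      · have hsub2 : C₀ᶜ ⊆ {β} := by
          intro w hw
          have hw' : w ∉ C₀ := Finset.mem_compl.mp hw
          have : w ∈ insert β S := by
            by_contra h'; exact hw' (hsub (Finset.mem_compl.mpr h'))
          rcases Finset.mem_insert.mp this with rfl | h''
          · exact Finset.mem_singleton_self _
          · rw [hSeq] at h''
            rcases Finset.mem_insert.mp h'' with rfl | h'''
            · exact absurd hαC₀ hw'
            · rw [Finset.mem_singleton.mp h'''] at hw'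
              exact absurd hx hw'
        have q1 := Finset.card_le_card hsub2
        have q2 := t.two_le_compl C₀ hC₀
        simp only [Finset.card_singleton] at q1
        omega
      · -- C₀ = insert α (insert β S)ᶜ
        have hCeq : C₀ = insert α ((insert β S)ᶜ) := by
          apply Finset.Subset.antisymm
          · intro w hw
            by_cases hw2 : w ∈ (insert β S)ᶜ
            · exact Finset.mem_insert_of_mem hw2
            · have hw3 : w ∈ insert β S := by
                by_contra hq; exact hw2 (Finset.mem_compl.mpr hq)
              rcases Finset.mem_insert.mp hw3 with rfl | h''
              · exact absurd hw hβC₀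
              · rw [hSeq] at h''
                rcases Finset.mem_insert.mp h'' with rfl | h'''
                · exact Finset.mem_insert_self _ _
                · rw [Finset.mem_singleton.mp h'''] at hw
                  exact absurd hw hx
          · intro w hw
            rcases Finset.mem_insert.mp hw with rfl | h''
            · exact hαC₀
            · exact hsub h''
        have hαn : α ∉ (insert β S)ᶜ := by simp [Finset.mem_insert, hα]
        have block1 : t.Block (C₀.erase α) := by
          rw [hCeq, Finset.erase_insert hαn]
          exact Or.inr (t.compl_mem _ hT2)
        have block2 : t.Block (C₀ᶜ.erase β) := by
          have : C₀ᶜ.erase β = {x} := by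
            apply Finset.Subset.antisymm
            · intro w hw
              obtain ⟨hwβ, hwC⟩ := Finset.mem_erase.mp hw
              have hw' : w ∉ C₀ := Finset.mem_compl.mp hwC
              rw [hCeq] at hw'
              have hwα : w ≠ α := fun h' => hw' (h' ▸ Finset.mem_insert_self _ _)
              have hwm : w ∈ insert β S := by
                by_contra hq
                exact hw' (Finset.mem_insert_of_mem (Finset.mem_compl.mpr hq))
              rcases Finset.mem_insert.mp hwm with rfl | h''
              · exact absurd rfl hwβ
              · rw [hSeq] at h''
                rcases Finset.mem_insert.mp h'' with rfl | h'''
                · exact absurd rfl hwα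
                · exact h'''
            · intro w hw
              rw [Finset.mem_singleton.mp hw]
              refine Finset.mem_erase.mpr ⟨hxβ, Finset.mem_compl.mpr hx⟩
          rw [this]
          exact Or.inl (Finset.card_singleton x)
        exact hadj (Or.inr ⟨C₀, hC₀, hαC₀, hβC₀, block1, block2⟩)
  by_cases h2 : (Sᶜ.erase β).card = 1
  · -- |Sᶜ| = 2
    have h1' : 2 ≤ (S.erase α).card := by omega
    obtain ⟨x, hxeq⟩ := Finset.card_eq_one.mp h2
    have hxSc : x ∈ Sᶜ ∧ x ≠ β := by
      have : x ∈ Sᶜ.erase β := by rw [hxeq]; exact Finset.mem_singleton_self x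
      exact ⟨Finset.mem_of_mem_erase this, (Finset.mem_erase.mp this).1⟩
    have hxα : x ≠ α := fun h' => hαc (h' ▸ hxSc.1)
    have hSceq : Sᶜ = insert β {x} := by rw [← hxeq, Finset.insert_erase hβc]
    rcases (del_transfer α hyα hαc hc2c (by rw [compl_compl]; omega)).mp
        (Or.inl (y.compl_mem S hS)) with h | hV
    · exact (compl_mem_iff t).mp h
    -- hV : insert α Sᶜ ∈ t.splits
    have hVc : (insert α Sᶜ)ᶜ = S.erase α := by rw [Finset.compl_insert, compl_compl]
    rcases t.compat C₀ hC₀ _ hV with h | h | h | h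
    · exact absurd (em h α hαC₀ (Finset.mem_insert_self _ _)) (by simp)
    · -- C₀ ⊆ insert α Sᶜ = {α, β, x}, so C₀ = {α, x}
      exfalso
      have hsub : C₀ ⊆ insert α {x} := by
        intro w hw
        have : w ∈ insert α Sᶜ := by
          by_contra h'; exact em h w hw (Finset.mem_compl.mpr h')
        rcases Finset.mem_insert.mp this with rfl | h''
        · exact Finset.mem_insert_self _ _
        · rw [hSceq] at h''
          rcases Finset.mem_insert.mp h'' with rfl | h'''
          · exact absurd hw hβC₀
          · exact Finset.mem_insert_of_mem h'''
      have hCeq : C₀ = insert α {x} := by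
        refine Finset.eq_of_subset_of_card_le hsub ?_
        have hle : (insert α ({x} : Finset A)).card ≤ 2 :=
          le_trans (Finset.card_insert_le _ _) (by simp)
        have h2C := t.two_le C₀ hC₀
        omega
      have block1 : t.Block (C₀.erase α) := by
        rw [hCeq, Finset.erase_insert (by simp [hxα.symm])]
        exact Or.inl (Finset.card_singleton x)
      have block2 : t.Block (C₀ᶜ.erase β) := by
        have : C₀ᶜ.erase β = (insert α Sᶜ)ᶜ := by
          rw [hCeq, hSceq]
          ext w
          simp only [Finset.mem_erase, Finset.mem_compl, Finset.mem_insert,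
            Finset.mem_singleton]
          tauto
        rw [this]
        exact Or.inr (t.compl_mem _ hV)
      exact hadj (Or.inr ⟨C₀, hC₀, hαC₀, hβC₀, block1, block2⟩)
    · exact absurd (em h β (Finset.mem_compl.mpr hβC₀)
        (Finset.mem_insert_of_mem hβc)) (by simp)
    · -- (insert α Sᶜ)ᶜ = S.erase α ⊆ C₀
      have hsub : S.erase α ⊆ C₀ := by
        intro w hw
        by_contra h'
        exact em h w (Finset.mem_compl.mpr h') (by rw [hVc]; exact hw)
      by_cases hx : x ∈ C₀
      · exfalso
        have hsub2 : C₀ᶜ ⊆ {β} := by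
          intro w hw
          have hw' : w ∉ C₀ := Finset.mem_compl.mp hw
          have hwS : w ∉ S.erase α := fun h' => hw' (hsub h')
          have hwα : w ≠ α := fun h' => hw' (h' ▸ hαC₀)
          have : w ∉ S := fun h' => hwS (Finset.mem_erase.mpr ⟨hwα, h'⟩)
          have : w ∈ Sᶜ := Finset.mem_compl.mpr this
          rw [hSceq] at this
          rcases Finset.mem_insert.mp this with rfl | h''
          · exact Finset.mem_singleton_self _
          · rw [Finset.mem_singleton.mp h''] at hw'
            exact absurd hx hw'
        have q1 := Finset.card_le_card hsub2
        have q2 := y.two_le_compl S hS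
        have q3 := t.two_le_compl C₀ hC₀
        simp only [Finset.card_singleton] at q1
        omega
      · -- C₀ = S
        have : C₀ = S := by
          apply Finset.Subset.antisymm
          · intro w hw
            by_contra hwS
            have : w ∈ Sᶜ := Finset.mem_compl.mpr hwS
            rw [hSceq] at this
            rcases Finset.mem_insert.mp this with rfl | h''
            · exact hβC₀ hw
            · rw [Finset.mem_singleton.mp h''] at hw
              exact hx hw
          · intro w hw
            by_cases hwα : w = α
            · exact hwα ▸ hαC₀
            · exact hsub (Finset.mem_erase.mpr ⟨hwα, hw⟩)
        rwa [this] at hC₀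
  · -- generic case
    have h1' : 2 ≤ (S.erase α).card := by omega
    have h2' : 2 ≤ (Sᶜ.erase β).card := by omega
    have cond1 : 2 ≤ ((S.erase α)ᶜ.erase α).card := by
      rw [hins, Finset.erase_insert hαc]; omega
    rcases (del_transfer α hyα (Finset.notMem_erase α S) h1' cond1).mp
        (Or.inr (by rwa [Finset.insert_erase hα])) with h | h
    swap
    · rwa [Finset.insert_erase hα] at h
    rcases (del_transfer β hyβ hβ hc2 h2').mp (Or.inl hS) with h' | h'
    · exact h'
    exfalso
    have hcomm : insert α (insert β (S.erase α)) = insert β S := by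
      rw [Finset.insert_comm, Finset.insert_erase hα]
    exact hadj (adj_of_sandwich hαβ h (by rwa [hcomm]) (Finset.notMem_erase α S)
      (fun hc => hβ (Finset.mem_of_mem_erase hc)))

lemma stmt18_part2 {t y : LTree A} {α β : A} (hαβ : α ≠ β) (hadj : ¬ t.Adjacent α β)
    (hyα : y.del α = t.del α) (hyβ : y.del β = t.del β) : y = t := by
  obtain ⟨C₀, hC₀, hαC₀, hβC₀⟩ := sep_of_not_forall (fun h => hadj (Or.inl h))
  have hC₀y : C₀ ∈ y.splits := Bty hαβ hadj hyα hyβ hC₀ hαC₀ hβC₀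
  have k2 := t.two_le C₀ hC₀
  have k2c := t.two_le_compl C₀ hC₀
  obtain ⟨c, hc⟩ := Finset.card_pos.mp (show 0 < (C₀.erase α).card by
    rw [Finset.card_erase_of_mem hαC₀]; omega)
  obtain ⟨d, hd⟩ := Finset.card_pos.mp (show 0 < (C₀ᶜ.erase β).card by
    rw [Finset.card_erase_of_mem (Finset.mem_compl.mpr hβC₀)]; omega)
  obtain ⟨hcα, hcC⟩ := Finset.mem_erase.mp hc
  obtain ⟨hdβ, hdC⟩ := Finset.mem_erase.mp hd
  have hdC' : d ∉ C₀ := Finset.mem_compl.mp hdC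
  have hcβ : c ≠ β := fun h' => hβC₀ (h' ▸ hcC)
  have hdα : d ≠ α := fun h' => hdC' (h' ▸ hαC₀)
  have hpair : ∀ u : LTree A, C₀ ∈ u.splits → ∀ S ∈ u.splits, α ∈ S → β ∈ S →
      S.card = 2 → False := by
    intro u hCu S hSu hαS hβS hcard
    have hSeq : S = insert α {β} := by
      refine (Finset.eq_of_subset_of_card_le ?_ ?_).symm
      · intro w hw
        rcases Finset.mem_insert.mp hw with rfl | hw'
        · exact hαS
        · exact (Finset.mem_singleton.mp hw') ▸ hβS
      · have hpc : (insert α ({β} : Finset A)).card = 2 := by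
          rw [Finset.card_insert_of_notMem (by simp [hαβ])]; simp
        omega
    refine compat4 u (a := α) (b := β) (c := c) (d := d) hSu hCu hαS hαC₀ hβS hβC₀
      ?_ hcC ?_ hdC'
    · rw [hSeq]; simp [hcα, hcβ]
    · rw [hSeq]; simp [hdα, hdβ]
  apply ext'
  ext S
  constructor
  · intro hS
    by_cases hαS : α ∈ S <;> by_cases hβS : β ∈ S
    · by_cases h3 : 3 ≤ S.card
      · have := A0 hαβ hyα hyβ (y.compl_mem S hS) (by simp [hαS]) (by simp [hβS])
          (by rw [compl_compl]; exact h3)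
        exact (compl_mem_iff t).mp this
      · exact absurd (hpair y hC₀y S hS hαS hβS (by have := y.two_le S hS; omega)) (by simp)
    · exact Byt hαβ hadj hyα hyβ hC₀ hαC₀ hβC₀ hS hαS hβS
    · have := Byt hαβ hadj hyα hyβ hC₀ hαC₀ hβC₀ (y.compl_mem S hS)
        (Finset.mem_compl.mpr hαS) (by simp [hβS])
      exact (compl_mem_iff t).mp this
    · by_cases h3 : 3 ≤ Sᶜ.card
      · exact A0 hαβ hyα hyβ hS hαS hβS h3
      · refine absurd (hpair y hC₀y Sᶜ (y.compl_mem S hS) (Finset.mem_compl.mpr hαS)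
          (Finset.mem_compl.mpr hβS) (by have := y.two_le_compl S hS; omega)) (by simp)
  · intro hS
    by_cases hαS : α ∈ S <;> by_cases hβS : β ∈ S
    · by_cases h3 : 3 ≤ S.card
      · have := A0 hαβ hyα.symm hyβ.symm (t.compl_mem S hS) (by simp [hαS]) (by simp [hβS])
          (by rw [compl_compl]; exact h3)
        exact (compl_mem_iff y).mp this
      · exact absurd (hpair t hC₀ S hS hαS hβS (by have := t.two_le S hS; omega)) (by simp)
    · exact Bty hαβ hadj hyα hyβ hS hαS hβS
    · have := Bty hαβ hadj hyα hyβ (t.compl_mem S hS)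
        (Finset.mem_compl.mpr hαS) (by simp [hβS])
      exact (compl_mem_iff y).mp this
    · by_cases h3 : 3 ≤ Sᶜ.card
      · exact A0 hαβ hyα.symm hyβ.symm hS hαS hβS h3
      · refine absurd (hpair t hC₀ Sᶜ (t.compl_mem S hS) (Finset.mem_compl.mpr hαS)
          (Finset.mem_compl.mpr hβS) (by have := t.two_le_compl S hS; omega)) (by simp)

lemma stmt18_part1 {t : LTree A} {α β : A} (hαβ : α ≠ β) (hadj : ¬ t.Adjacent α β) :
    ((t.del β).ptData ⟨α, hαβ⟩).image (Finset.image Subtype.val) ≠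
      ((t.del α).ptData ⟨β, hαβ.symm⟩).image (Finset.image Subtype.val) := by
  intro hPP
  obtain ⟨C₀, hC₀, hαC₀, hβC₀⟩ := sep_of_not_forall (fun h => hadj (Or.inl h))
  have noBB : t.Block (C₀.erase α) → t.Block (C₀ᶜ.erase β) → False := fun b1 b2 =>
    hadj (Or.inr ⟨C₀, hC₀, hαC₀, hβC₀, b1, b2⟩)
  have hβc : β ∈ C₀ᶜ := Finset.mem_compl.mpr hβC₀
  have hαc : α ∉ C₀ᶜ := by simp [hαC₀]
  have c2 := t.two_le C₀ hC₀
  have c2c := t.two_le_compl C₀ hC₀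
  have cErα : (C₀.erase α).card = C₀.card - 1 := Finset.card_erase_of_mem hαC₀
  have cErβ : (C₀ᶜ.erase β).card = C₀ᶜ.card - 1 := Finset.card_erase_of_mem hβc
  have cβ : C₀.erase β = C₀ := Finset.erase_eq_of_notMem hβC₀
  have cα : C₀ᶜ.erase α = C₀ᶜ := Finset.erase_eq_of_notMem hαc
  by_cases h1 : (C₀.erase α).card = 1 <;> by_cases h2 : (C₀ᶜ.erase β).card = 1
  · exact noBB (Or.inl h1) (Or.inl h2)
  · -- C₀ = {α, x}
    have h2' : 2 ≤ (C₀ᶜ.erase β).card := by omega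
    obtain ⟨x, hxeq⟩ := Finset.card_eq_one.mp h1
    have hxm : x ∈ C₀.erase α := by rw [hxeq]; exact Finset.mem_singleton_self x
    obtain ⟨hxα, hxC⟩ := Finset.mem_erase.mp hxm
    have hxβ : x ≠ β := fun h' => hβC₀ (h' ▸ hxC)
    have hmemα : ({x} : Finset A) ∈
        ((t.del β).ptData ⟨α, hαβ⟩).image (Finset.image Subtype.val) :=
      (mem_P t hαβ).mpr ⟨C₀, hC₀, hαC₀, by rw [cβ]; omega, h2', by rw [cβ, hxeq]⟩
    rw [hPP] at hmemα
    obtain ⟨C', hC', hβC', d1, d2, hW⟩ := (mem_P t hαβ.symm).mp hmemα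
    rcases recon hαβ.symm hβC' hW with ⟨hαC', rfl⟩ | ⟨hαC', rfl⟩
    · obtain ⟨w, hw⟩ := Finset.card_pos.mp (show 0 < (C₀ᶜ.erase β).card by omega)
      obtain ⟨hwβ, hwc⟩ := Finset.mem_erase.mp hw
      have hwC : w ∉ C₀ := Finset.mem_compl.mp hwc
      have hwx : w ≠ x := fun h' => hwC (h' ▸ hxC)
      exact compat4 t (a := x) (b := α) (c := β) (d := w) hC₀ hC' hxC
        (Finset.mem_insert_of_mem (Finset.mem_singleton_self x)) hαC₀ hαC'
        hβC₀ (Finset.mem_insert_self _ _) hwC (by simp [hwβ, hwx])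
    · have hC0eq : C₀ = insert α {x} := by rw [← hxeq, Finset.insert_erase hαC₀]
      refine noBB (Or.inl h1) (Or.inr ?_)
      have hid : C₀ᶜ.erase β = (insert β (insert α {x}))ᶜ := by
        rw [hC0eq]; ext w
        simp only [Finset.mem_erase, Finset.mem_compl, Finset.mem_insert, Finset.mem_singleton]
        tauto
      rw [hid]; exact t.compl_mem _ hC'
  · -- C₀ᶜ = {β, x}
    have h1' : 2 ≤ (C₀.erase α).card := by omega
    obtain ⟨x, hxeq⟩ := Finset.card_eq_one.mp h2
    have hxm : x ∈ C₀ᶜ.erase β := by rw [hxeq]; exact Finset.mem_singleton_self x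
    obtain ⟨hxβ, hxc⟩ := Finset.mem_erase.mp hxm
    have hxC : x ∉ C₀ := Finset.mem_compl.mp hxc
    have hxα : x ≠ α := fun h' => hxC (h' ▸ hαC₀)
    have hmemβ : ({x} : Finset A) ∈
        ((t.del α).ptData ⟨β, hαβ.symm⟩).image (Finset.image Subtype.val) :=
      (mem_P t hαβ.symm).mpr ⟨C₀ᶜ, t.compl_mem C₀ hC₀, hβc, by rw [cα]; omega,
        by rw [compl_compl]; omega, by rw [cα, hxeq]⟩
    rw [← hPP] at hmemβ
    obtain ⟨C'', hC'', hαC'', d1, d2, hW⟩ := (mem_P t hαβ).mp hmemβ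
    rcases recon hαβ hαC'' hW with ⟨hβC'', rfl⟩ | ⟨hβC'', rfl⟩
    · obtain ⟨w, hw⟩ := Finset.card_pos.mp (show 0 < (C₀.erase α).card by omega)
      obtain ⟨hwα, hwC⟩ := Finset.mem_erase.mp hw
      have hwx : w ≠ x := fun h' => hxC (h' ▸ hwC)
      exact compat4 t (a := α) (b := w) (c := x) (d := β) hC₀ hC'' hαC₀
        (Finset.mem_insert_self _ _) hwC (by simp [hwα, hwx]) hxC
        (Finset.mem_insert_of_mem (Finset.mem_singleton_self x)) hβC₀ hβC''
    · have hC0ceq : C₀ᶜ = insert β {x} := by rw [← hxeq, Finset.insert_erase hβc]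
      refine noBB (Or.inr ?_) (Or.inl h2)
      have hC0eq : C₀ = (insert β {x})ᶜ := by rw [← hC0ceq, compl_compl]
      have hid : C₀.erase α = (insert α (insert β {x}))ᶜ := by
        rw [hC0eq]; ext w
        simp only [Finset.mem_erase, Finset.mem_compl, Finset.mem_insert, Finset.mem_singleton]
        tauto
      rw [hid]; exact t.compl_mem _ hC''
  · -- generic case
    have h1' : 2 ≤ (C₀.erase α).card := by omega
    have h2' : 2 ≤ (C₀ᶜ.erase β).card := by omega
    have hαE : α ∉ C₀.erase α := Finset.notMem_erase α C₀
    have hβE : β ∉ C₀.erase α := fun h' => hβC₀ (Finset.mem_of_mem_erase h')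
    have hmemα : C₀.erase α ∈
        ((t.del β).ptData ⟨α, hαβ⟩).image (Finset.image Subtype.val) :=
      (mem_P t hαβ).mpr ⟨C₀, hC₀, hαC₀, by rw [cβ]; omega, h2', by rw [cβ]⟩
    rw [hPP] at hmemα
    obtain ⟨C', hC', hβC', d1, d2, hW⟩ := (mem_P t hαβ.symm).mp hmemα
    rcases recon hαβ.symm hβC' hW with ⟨hαC', rfl⟩ | ⟨hαC', rfl⟩
    · obtain ⟨w1, hw1⟩ := Finset.card_pos.mp (show 0 < (C₀.erase α).card by omega)
      obtain ⟨hw1α, hw1C⟩ := Finset.mem_erase.mp hw1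
      obtain ⟨w2, hw2⟩ := Finset.card_pos.mp (show 0 < (C₀ᶜ.erase β).card by omega)
      obtain ⟨hw2β, hw2c⟩ := Finset.mem_erase.mp hw2
      have hw2C : w2 ∉ C₀ := Finset.mem_compl.mp hw2c
      refine compat4 t (a := w1) (b := α) (c := β) (d := w2) hC₀ hC' hw1C
        (Finset.mem_insert_of_mem hw1) hαC₀ hαC' hβC₀ (Finset.mem_insert_self _ _)
        hw2C ?_
      intro hmem
      rcases Finset.mem_insert.mp hmem with rfl | hmem'
      · exact hw2β rfl
      · exact hw2C (Finset.mem_of_mem_erase hmem')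
    · have hC'eq : insert β (insert α (C₀.erase α)) = insert β C₀ := by
        rw [Finset.insert_erase hαC₀]
      rw [hC'eq] at hC'
      have blockR : t.Block (C₀ᶜ.erase β) := by
        have hid : C₀ᶜ.erase β = (insert β C₀)ᶜ := by rw [Finset.compl_insert]
        rw [hid]; exact Or.inr (t.compl_mem _ hC')
      have hmemβ : C₀ᶜ.erase β ∈
          ((t.del α).ptData ⟨β, hαβ.symm⟩).image (Finset.image Subtype.val) :=
        (mem_P t hαβ.symm).mpr ⟨C₀ᶜ, t.compl_mem C₀ hC₀, hβc, by rw [cα]; omega,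
          by rw [compl_compl]; omega, by rw [cα]⟩
      rw [← hPP] at hmemβ
      obtain ⟨C'', hC'', hαC'', e1, e2, hW'⟩ := (mem_P t hαβ).mp hmemβ
      rcases recon hαβ hαC'' hW' with ⟨hβC'', rfl⟩ | ⟨hβC'', rfl⟩
      · obtain ⟨w1, hw1⟩ := Finset.card_pos.mp (show 0 < (C₀.erase α).card by omega)
        obtain ⟨hw1α, hw1C⟩ := Finset.mem_erase.mp hw1
        obtain ⟨w2, hw2⟩ := Finset.card_pos.mp (show 0 < (C₀ᶜ.erase β).card by omega)
        obtain ⟨hw2β, hw2c⟩ := Finset.mem_erase.mp hw2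
        have hw2C : w2 ∉ C₀ := Finset.mem_compl.mp hw2c
        refine compat4 t (a := α) (b := w1) (c := w2) (d := β) hC₀ hC'' hαC₀
          (Finset.mem_insert_self _ _) hw1C ?_ hw2C (Finset.mem_insert_of_mem hw2) hβC₀ ?_
        · intro hmem
          rcases Finset.mem_insert.mp hmem with rfl | hmem'
          · exact hw1α rfl
          · exact Finset.mem_compl.mp (Finset.mem_of_mem_erase hmem') hw1C
        · intro hmem
          rcases Finset.mem_insert.mp hmem with rfl | hmem'
          · exact hαβ rfl
          · exact Finset.notMem_erase β C₀ᶜ hmem'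
      · have hC''eq : insert α (insert β (C₀ᶜ.erase β)) = insert α C₀ᶜ := by
          rw [Finset.insert_erase hβc]
        rw [hC''eq] at hC''
        have blockL : t.Block (C₀.erase α) := by
          have hid : C₀.erase α = (insert α C₀ᶜ)ᶜ := by
            rw [Finset.compl_insert, compl_compl]
          rw [hid]; exact Or.inr (t.compl_mem _ hC'')
        exact noBB blockL blockR

end LTree

/-- If the leaves `α` and `β` of `t` are not adjacent, then
their attachment points, viewed as points of `∂_α ∂_β t` (compared here via
their combinatorial descriptions, pushed into subsets of `A`), are distinct;
consequently `t` is recovered as the unique tree obtained by simultaneously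
attaching `α` and `β` to `∂_α ∂_β t` at these two points, i.e. the unique tree
with the given two deletions. -/
theorem attachment_points_distinct {A : Type*} [Fintype A] [DecidableEq A]
    (t : LTree A) (α β : A) (hαβ : α ≠ β) (hadj : ¬ t.Adjacent α β) :
    ((t.del β).ptData ⟨α, hαβ⟩).image (Finset.image Subtype.val) ≠
        ((t.del α).ptData ⟨β, hαβ.symm⟩).image (Finset.image Subtype.val) ∧
    ∀ y : LTree A, (y.del α = t.del α ∧ y.del β = t.del β) ↔ y = t := by
  refine ⟨LTree.stmt18_part1 hαβ hadj, fun y => ⟨fun h => LTree.stmt18_part2 hαβ hadj h.1 h.2,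
    fun h => by subst h; exact ⟨rfl, rfl⟩⟩⟩
end
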